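/- For every integer n ≥ 2, all i, j ∈ {1,…,n−1}, and all integers k, k' with 0 ≤ k < k' ≤ min{i−1, j−1, n−1−i, n−1−j}, one has b(i,j,k) < b(i,j,k') in the Bruhat order on S_n. -/

import Mathlib

/-!
For `i ≤ j`, `b(i,j,k)` has one-line notation
`1, …, i-k-1, i+1, …, j+k+1, i-k, …, i, j+k+2, …, n`: it exchanges two adjacent increasing blocks.
Passing from `k` to `k + 1` factors as
`b(i-1,j,k) = (s_{i-k-1} ⋯ s_{i-1})⁻¹ b(i,j,k)` and `b(i,j,k+1) = (s_i ⋯ s_{j+k+1}) b(i-1,j,k)`.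
Multiplying on the left by the letters of such a run one at a time, each letter swaps two adjacent
values whose positions are in increasing order, so it is a Bruhat step raising the length by one.
The case `j < i` follows because inversion preserves the Bruhat order.
-/

namespace Paper

/-- The simple transposition `s_i = (i, i+1)` (1-based) in `S_n`, realized as a
permutation of `Fin n`. For `i` outside `{1, …, n-1}` we set `s i = 1`. -/
def s (n i : ℕ) : Equiv.Perm (Fin n) :=
  if h : 1 ≤ i ∧ i < n then Equiv.swap ⟨i - 1, by omega⟩ ⟨i, by omega⟩ else 1

/-- The length of a permutation: its number of inversions. -/
def len {n : ℕ} (w : Equiv.Perm (Fin n)) : ℕ :=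
  (Finset.univ.filter (fun p : Fin n × Fin n => p.1 < p.2 ∧ w p.2 < w p.1)).card

/-- `i` is a left descent of `w` if `1 ≤ i ≤ n-1` and `ℓ(s_i w) < ℓ(w)`. -/
def IsLeftDescent {n : ℕ} (w : Equiv.Perm (Fin n)) (i : ℕ) : Prop :=
  1 ≤ i ∧ i ≤ n - 1 ∧ len (s n i * w) < len w

/-- `i` is a right descent of `w` if `1 ≤ i ≤ n-1` and `ℓ(w s_i) < ℓ(w)`. -/
def IsRightDescent {n : ℕ} (w : Equiv.Perm (Fin n)) (i : ℕ) : Prop :=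
  1 ≤ i ∧ i ≤ n - 1 ∧ len (w * s n i) < len w

/-- A permutation is bigrassmannian if it has exactly one left descent and
exactly one right descent. -/
def Bigrassmannian {n : ℕ} (w : Equiv.Perm (Fin n)) : Prop :=
  (∃! i, IsLeftDescent w i) ∧ (∃! j, IsRightDescent w j)

/-- One step of the Bruhat order: `w ⋖ t * w` for a transposition `t`
with `ℓ(w) < ℓ(t w)`. -/
def BruhatStep {n : ℕ} (w w' : Equiv.Perm (Fin n)) : Prop :=
  ∃ a b : Fin n, a ≠ b ∧ w' = Equiv.swap a b * w ∧ len w < len w'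

/-- The Bruhat order on `S_n`: the partial order generated by `w < tw` whenever
`t` is a transposition and `ℓ(w) < ℓ(tw)`. -/
def BruhatLE {n : ℕ} : Equiv.Perm (Fin n) → Equiv.Perm (Fin n) → Prop :=
  Relation.ReflTransGen BruhatStep

/-- Strict Bruhat order. -/
def BruhatLT {n : ℕ} (x y : Equiv.Perm (Fin n)) : Prop :=
  BruhatLE x y ∧ x ≠ y

/-- The product `s_a s_{a+1} ⋯ s_b` of consecutive simple transpositions. -/
def ascRun (n a b : ℕ) : Equiv.Perm (Fin n) :=
  ((List.range (b + 1 - a)).map (fun t => s n (a + t))).prod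

/-- For `i ≤ j`: `b(i,j,k) = (s_i ⋯ s_{j+k})(s_{i-1} ⋯ s_{j+k-1}) ⋯ (s_{i-k} ⋯ s_j)`. -/
def bAux (n i j k : ℕ) : Equiv.Perm (Fin n) :=
  ((List.range (k + 1)).map (fun m => ascRun n (i - m) (j + k - m))).prod

/-- The bigrassmannian permutation `b(i,j,k)`; for `j < i` it is `b(j,i,k)⁻¹`. -/
def b (n i j k : ℕ) : Equiv.Perm (Fin n) :=
  if i ≤ j then bAux n i j k else (bAux n j i k)⁻¹

/-- The value `w(i)` of a permutation `w ∈ S_n` at `i ∈ {1, …, n}`, 1-based. -/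
def act {n : ℕ} (w : Equiv.Perm (Fin n)) (i : ℕ) : ℕ :=
  if h : 1 ≤ i ∧ i ≤ n then ((w ⟨i - 1, by omega⟩ : Fin n) : ℕ) + 1 else i

/-- The essential set of a permutation `w ∈ S_n`. -/
def Ess {n : ℕ} (w : Equiv.Perm (Fin n)) : Set (ℕ × ℕ) :=
  {p | 1 ≤ p.1 ∧ p.1 ≤ n - 1 ∧ 1 ≤ p.2 ∧ p.2 ≤ n - 1 ∧
    p.1 < act w⁻¹ p.2 ∧ p.2 < act w p.1 ∧
    act w (p.1 + 1) ≤ p.2 ∧ act w⁻¹ (p.2 + 1) ≤ p.1}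

/-- The rank function `r_w(i,j) = |{k ≤ i : w(k) ≤ j}|` (1-based). -/
def rnk {n : ℕ} (w : Equiv.Perm (Fin n)) (i j : ℕ) : ℕ :=
  ((Finset.Icc 1 i).filter (fun k => act w k ≤ j)).card

/-- The co-rank function `t_w(i,j) = min{i,j} - r_w(i,j)`. -/
def cork {n : ℕ} (w : Equiv.Perm (Fin n)) (i j : ℕ) : ℕ :=
  min i j - rnk w i j

/-- The set of bigrassmannian permutations `y ≤ w` in Bruhat order. -/
def BSet {n : ℕ} (w : Equiv.Perm (Fin n)) : Set (Equiv.Perm (Fin n)) :=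
  {y | Bigrassmannian y ∧ BruhatLE y w}

/-- The set of Bruhat-maximal elements of `BSet w`. -/
def BM {n : ℕ} (w : Equiv.Perm (Fin n)) : Set (Equiv.Perm (Fin n)) :=
  {y ∈ BSet w | ∀ z ∈ BSet w, BruhatLE y z → z = y}


open Equiv

lemma s_apply_val {n a : ℕ} (ha : 1 ≤ a) (han : a < n) (x : Fin n) :
    (s n a x : ℕ) = if (x : ℕ) = a - 1 then a else if (x : ℕ) = a then a - 1 else x := by
  rw [s, dif_pos ⟨ha, han⟩, swap_apply_def]
  split_ifs <;> simp only [Fin.ext_iff] at * <;> omega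

lemma s_inv (n a : ℕ) : (s n a)⁻¹ = s n a := by
  unfold s; split_ifs <;> simp only [swap_inv, inv_one]

lemma swap_apply_lt_swap_apply_iff {n : ℕ} {a c u v : Fin n} (hac : (c : ℕ) = a + 1)
    (huv : u ≠ v) :
    swap a c v < swap a c u ↔ (v < u ∧ ¬(u = c ∧ v = a)) ∨ (u = a ∧ v = c) := by
  have huv' : (u : ℕ) ≠ v := Fin.val_ne_of_ne huv
  simp only [swap_apply_def]
  split_ifs <;> simp only [Fin.lt_def, Fin.ext_iff] at * <;> omega

lemma len_swap_mul {n : ℕ} (w : Perm (Fin n)) {p q : Fin n} (hpq : p < q)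
    (hadj : (w q : ℕ) = w p + 1) : len (swap (w p) (w q) * w) = len w + 1 := by
  have hwpq : w p < w q := by rw [Fin.lt_def]; omega
  have hinversions : Finset.univ.filter (fun x : Fin n × Fin n => x.1 < x.2 ∧
        (swap (w p) (w q) * w) x.2 < (swap (w p) (w q) * w) x.1)
      = insert (p, q)
          (Finset.univ.filter (fun x : Fin n × Fin n => x.1 < x.2 ∧ w x.2 < w x.1)) := by
    ext ⟨x, y⟩
    rw [Finset.mem_insert, Finset.mem_filter, Finset.mem_filter]
    simp only [Finset.mem_univ, true_and, Perm.mul_apply, Prod.mk.injEq]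
    by_cases hxy : x < y
    · simp only [swap_apply_lt_swap_apply_iff hadj (w.injective.ne hxy.ne), w.injective.eq_iff]
      constructor
      · rintro ⟨-, ⟨hlt, -⟩ | h⟩ <;> tauto
      · rintro (⟨rfl, rfl⟩ | ⟨-, hlt⟩)
        · exact ⟨hxy, .inr ⟨rfl, rfl⟩⟩
        · exact ⟨hxy, .inl ⟨hlt, fun ⟨hx, hy⟩ => lt_asymm hpq (hx ▸ hy ▸ hxy)⟩⟩
    · exact ⟨fun h => absurd h.1 hxy, by rintro (⟨rfl, rfl⟩ | ⟨h, -⟩) <;> contradiction⟩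
  have hnotMem : (p, q) ∉ Finset.univ.filter
      (fun x : Fin n × Fin n => x.1 < x.2 ∧ w x.2 < w x.1) := by
    simp [hwpq.le.not_gt]
  rw [len, hinversions, Finset.card_insert_of_notMem hnotMem, len]

lemma bruhatStep_s_mul {n a : ℕ} {w : Perm (Fin n)} {p q : Fin n} (hpq : p < q)
    (hp : (w p : ℕ) + 1 = a) (hq : (w q : ℕ) = a) : BruhatStep w (s n a * w) := by
  have hs : s n a = swap (w p) (w q) := by
    rw [s, dif_pos ⟨by omega, hq ▸ (w q).isLt⟩]
    congr 1 <;> apply Fin.ext <;> dsimp only <;> omega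
  refine ⟨w p, w q, fun h => by rw [h] at hp; omega, hs ▸ rfl, ?_⟩
  rw [hs, len_swap_mul w hpq (by omega)]
  omega

lemma len_inv {n : ℕ} (w : Perm (Fin n)) : len w⁻¹ = len w := by
  unfold len
  apply Finset.card_bij' (fun x _ => (w⁻¹ x.2, w⁻¹ x.1)) (fun x _ => (w x.2, w x.1))
  · rintro ⟨x, y⟩ hm
    simp only [Finset.mem_filter, Finset.mem_univ, true_and] at hm ⊢
    exact ⟨hm.2, by simpa using hm.1⟩
  · rintro ⟨x, y⟩ hm
    simp only [Finset.mem_filter, Finset.mem_univ, true_and] at hm ⊢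
    exact ⟨hm.2, by simpa using hm.1⟩
  · rintro ⟨x, y⟩ _; simp
  · rintro ⟨x, y⟩ _; simp

lemma BruhatStep.inv {n : ℕ} {w w' : Perm (Fin n)} (h : BruhatStep w w') :
    BruhatStep w⁻¹ w'⁻¹ := by
  obtain ⟨a, c, hac, rfl, hlen⟩ := h
  refine ⟨w⁻¹ a, w⁻¹ c, w⁻¹.injective.ne hac, ?_, by rwa [len_inv, len_inv]⟩
  rw [mul_inv_rev, swap_inv, swap_apply_apply, inv_mul_cancel_right]

lemma BruhatLT.inv {n : ℕ} {x y : Perm (Fin n)} (h : BruhatLT x y) : BruhatLT x⁻¹ y⁻¹ :=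
  ⟨Relation.ReflTransGen.lift (r := BruhatStep) _ (fun _ _ => BruhatStep.inv) _ _ h.1,
    inv_injective.ne h.2⟩

lemma ascRun_of_lt {n a b : ℕ} (h : b < a) : ascRun n a b = 1 := by
  simp [ascRun, show b + 1 - a = 0 by omega]

lemma ascRun_of_le {n a b : ℕ} (h : a ≤ b) : ascRun n a b = s n a * ascRun n (a + 1) b := by
  rw [ascRun, show b + 1 - a = b + 1 - (a + 1) + 1 by omega, List.range_succ_eq_map]
  simp [ascRun, List.map_map, Function.comp_def, Nat.add_assoc, Nat.add_comm 1]

lemma ascRun_apply_val {n a b : ℕ} (ha : 1 ≤ a) (hab : a ≤ b + 1) (hb : b < n) (x : Fin n) :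
    (ascRun n a b x : ℕ) =
      if a ≤ (x : ℕ) + 1 ∧ (x : ℕ) + 1 ≤ b then (x : ℕ) + 1
      else if (x : ℕ) = b then a - 1 else x := by
  induction h : b + 1 - a generalizing a with
  | zero =>
    rw [ascRun_of_lt (by omega)]
    split_ifs <;> simp only [Perm.one_apply] <;> omega
  | succ d ih =>
    rw [ascRun_of_le (by omega), Perm.mul_apply, s_apply_val ha (by omega),
      ih (by omega) (by omega) (by omega)]
    split_ifs <;> omega

lemma bruhatLE_ascRun_mul {n a b : ℕ} (ha : 1 ≤ a) (hab : a ≤ b + 1) {w : Perm (Fin n)}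
    {q : Fin n} (hq : (w q : ℕ) = b) (hlt : ∀ p, a ≤ (w p : ℕ) + 1 → (w p : ℕ) < b → p < q) :
    BruhatLE w (ascRun n a b * w) := by
  have hb : b < n := hq ▸ (w q).isLt
  induction h : b + 1 - a generalizing a with
  | zero => rw [ascRun_of_lt (by omega), one_mul]; exact .refl
  | succ d ih =>
    set w₁ := ascRun n (a + 1) b * w
    obtain ⟨p, hwp⟩ : ∃ p, (w p : ℕ) = a - 1 := ⟨w⁻¹ ⟨a - 1, by omega⟩, by simp⟩
    have hp : (w₁ p : ℕ) + 1 = a := by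
      rw [Perm.mul_apply, ascRun_apply_val (by omega) (by omega) hb]
      split_ifs <;> omega
    have hq₁ : (w₁ q : ℕ) = a := by
      rw [Perm.mul_apply, ascRun_apply_val (by omega) (by omega) hb]
      split_ifs <;> omega
    have hpq : p < q := hlt p (by omega) (by omega)
    rw [ascRun_of_le (by omega), mul_assoc]
    exact (ih (by omega) (by omega) (fun p h₁ h₂ => hlt p (by omega) h₂) (by omega)).tail
      (bruhatStep_s_mul hpq hp hq₁)

lemma bruhatLE_ascRun_inv_mul {n a b : ℕ} (ha : 1 ≤ a) (hab : a ≤ b + 1) (hb : b < n)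
    {w : Perm (Fin n)} {p : Fin n} (hp : (w p : ℕ) + 1 = a)
    (hlt : ∀ q, a ≤ (w q : ℕ) → (w q : ℕ) ≤ b → p < q) :
    BruhatLE w ((ascRun n a b)⁻¹ * w) := by
  induction h : b + 1 - a generalizing a w with
  | zero => rw [ascRun_of_lt (by omega), inv_one, one_mul]; exact .refl
  | succ d ih =>
    obtain ⟨q, hq⟩ : ∃ q, (w q : ℕ) = a := ⟨w⁻¹ ⟨a, by omega⟩, by simp⟩
    have hs := s_apply_val ha (show a < n by omega)
    rw [ascRun_of_le (by omega), mul_inv_rev, s_inv, mul_assoc]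
    have hp₁ : ((s n a * w) p : ℕ) + 1 = a + 1 := by
      rw [Perm.mul_apply, hs]; split_ifs <;> omega
    have hlt₁ : ∀ q, a + 1 ≤ ((s n a * w) q : ℕ) → ((s n a * w) q : ℕ) ≤ b → p < q := by
      intro q h₁ h₂
      rw [Perm.mul_apply, hs] at h₁ h₂
      apply hlt <;> split_ifs at h₁ h₂ <;> omega
    exact .head (bruhatStep_s_mul (hlt q (by omega) (by omega)) hp hq)
      (ih (by omega) (by omega) hp₁ hlt₁ (by omega))

lemma bAux_zero (n i j : ℕ) : bAux n i j 0 = ascRun n i j := by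
  simp [bAux]

lemma bAux_succ (n i j k : ℕ) :
    bAux n i j (k + 1) = ascRun n i (j + k + 1) * bAux n (i - 1) j k := by
  rw [bAux, List.range_succ_eq_map]
  simp only [List.map_cons, List.prod_cons, List.map_map, Function.comp_def, bAux]
  congr 2
  refine List.map_congr_left fun m _ => ?_
  congr 1 <;> omega

lemma bAux_apply_val {n i j k : ℕ} (hi : k + 1 ≤ i) (hij : i ≤ j) (hn : j + k + 1 ≤ n)
    (x : Fin n) : (bAux n i j k x : ℕ) =
      if i ≤ (x : ℕ) + k + 1 ∧ (x : ℕ) + 1 ≤ j then (x : ℕ) + k + 1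
      else if j ≤ (x : ℕ) ∧ (x : ℕ) ≤ j + k then (x : ℕ) + i - (j + k + 1) else x := by
  induction k generalizing i with
  | zero =>
    rw [bAux_zero, ascRun_apply_val (by omega) (by omega) (by omega)]
    split_ifs <;> omega
  | succ k ih =>
    rw [bAux_succ, Perm.mul_apply, ascRun_apply_val (by omega) (by omega) (by omega),
      ih (i := i - 1) (by omega) (by omega) (by omega)]
    split_ifs <;> omega

lemma bAux_eq_ascRun_mul {n i j k : ℕ} (hi : k + 2 ≤ i) (hij : i ≤ j) (hn : j + k + 1 ≤ n) :
    bAux n i j k = ascRun n (i - k - 1) (i - 1) * bAux n (i - 1) j k := by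
  ext x
  rw [Perm.mul_apply, bAux_apply_val (by omega) hij hn,
    ascRun_apply_val (by omega) (by omega) (by omega), bAux_apply_val (by omega) (by omega) hn]
  split_ifs <;> omega

lemma bruhatLE_bAux_pred {n i j k : ℕ} (hi : k + 2 ≤ i) (hij : i ≤ j) (hn : j + k + 1 ≤ n) :
    BruhatLE (bAux n i j k) (bAux n (i - 1) j k) := by
  rw [eq_inv_mul_of_mul_eq (bAux_eq_ascRun_mul hi hij hn).symm]
  refine bruhatLE_ascRun_inv_mul (p := ⟨i - k - 2, by omega⟩) (by omega) (by omega) (by omega)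
    ?_ fun q => ?_ <;> rw [bAux_apply_val (by omega) hij hn]
  · split_ifs <;> simp only at * <;> omega
  · split_ifs <;> simp only [Fin.lt_def] <;> omega

lemma bruhatLE_bAux_pred_succ {n i j k : ℕ} (hi : k + 2 ≤ i) (hij : i ≤ j) (hn : j + k + 2 ≤ n) :
    BruhatLE (bAux n (i - 1) j k) (bAux n i j (k + 1)) := by
  rw [bAux_succ]
  refine bruhatLE_ascRun_mul (q := ⟨j + k + 1, by omega⟩) (by omega) (by omega) ?_ fun p => ?_ <;>
    rw [bAux_apply_val (by omega) (by omega) (by omega)]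
  · split_ifs <;> simp only at * <;> omega
  · split_ifs <;> simp only [Fin.lt_def] <;> omega

lemma bruhatLE_bAux_of_le {n i j k k' : ℕ} (hkk : k ≤ k') (hi : k' + 1 ≤ i) (hij : i ≤ j)
    (hn : j + k' + 1 ≤ n) : BruhatLE (bAux n i j k) (bAux n i j k') := by
  induction k', hkk using Nat.le_induction with
  | base => exact .refl
  | succ m _ ih =>
    exact (ih (by omega) (by omega)).trans
      ((bruhatLE_bAux_pred (by omega) hij (by omega)).trans
        (bruhatLE_bAux_pred_succ (by omega) hij hn))

lemma bAux_ne {n i j k k' : ℕ} (hkk : k < k') (hi : k' + 1 ≤ i) (hij : i ≤ j)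
    (hn : j + k' + 1 ≤ n) : bAux n i j k ≠ bAux n i j k' := by
  intro h
  have hx := congrArg (fun w : Perm (Fin n) => (w ⟨j + k', by omega⟩ : ℕ)) h
  rw [bAux_apply_val (by omega) hij (by omega), bAux_apply_val hi hij hn] at hx
  dsimp only at hx
  split_ifs at hx <;> omega

lemma bruhatLT_bAux {n i j k k' : ℕ} (hkk : k < k') (hi : k' + 1 ≤ i) (hij : i ≤ j)
    (hn : j + k' + 1 ≤ n) : BruhatLT (bAux n i j k) (bAux n i j k') :=
  ⟨bruhatLE_bAux_of_le hkk.le hi hij hn, bAux_ne hkk hi hij hn⟩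

theorem stmt6_general (n : ℕ) (i j k k' : ℕ)
    (hkk : k < k')
    (hk' : k' ≤ min (min (i - 1) (j - 1)) (min (n - 1 - i) (n - 1 - j))) :
    BruhatLT (b n i j k) (b n i j k') := by
  rcases le_or_gt i j with hij | hji
  · rw [b, b, if_pos hij, if_pos hij]
    exact bruhatLT_bAux hkk (by omega) hij (by omega)
  · rw [b, b, if_neg hji.not_ge, if_neg hji.not_ge]
    exact (bruhatLT_bAux hkk (by omega) hji.le (by omega)).inv

theorem stmt6 (n : ℕ) (hn : 2 ≤ n) (i j k k' : ℕ)
    (hi1 : 1 ≤ i) (hi2 : i ≤ n - 1) (hj1 : 1 ≤ j) (hj2 : j ≤ n - 1)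
    (hkk : k < k')
    (hk' : k' ≤ min (min (i - 1) (j - 1)) (min (n - 1 - i) (n - 1 - j))) :
    BruhatLT (b n i j k) (b n i j k') :=
  stmt6_general n i j k k' hkk hk'

end Paper
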